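/- Let X_1, X_2, … be real random variables with continuous marginal cdfs (so that X_1,…,X_n are almost surely pairwise distinct), let ε_1, ε_2, … be real random variables on the same probability space, let h_0 : ℝ → ℝ, and set Y_t = h_0(X_t) + ε_t. Suppose the anomaly-free outputs are in p-reasonable order for some p > 0, i.e., B⁰_{n,p} := n^{-1/p} Σ_{t=2}^n |h_0(X_{t:n}) − h_0(X_{t-1:n})| is bounded in probability. Then B_{n,p} := n^{-1/p} Σ_{t=2}^n |Y_{t,n} − Y_{t-1,n}| → ∞ in probability if and only if n^{-1/p} Σ_{t=2}^n |ε_{t,n} − ε_{t-1,n}| → ∞ in probability, where Y_{t,n} and ε_{t,n} denote the concomitants of Y_t and ε_t with respect to the inputs X_t. -/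

import Mathlib

open MeasureTheory ProbabilityTheory Filter
open scoped Classical

/-- The `t`-th order statistic (1-based) of `X 1, …, X n`. -/
noncomputable def orderStat {Ω : Type*} (X : ℕ → Ω → ℝ) (n t : ℕ) (ω : Ω) : ℝ :=
  (List.insertionSort (· ≤ ·) ((List.range n).map fun s => X (s + 1) ω)).getD (t - 1) 0

/-- The concomitant `Y_{t,n} = Σ_{s=1}^n Y_s · 1{X_s = X_{t:n}}`. -/
noncomputable def concomitant {Ω : Type*} (X Y : ℕ → Ω → ℝ) (n t : ℕ) (ω : Ω) : ℝ :=
  ∑ s ∈ Finset.Icc 1 n, Y s ω * (if X s ω = orderStat X n t ω then 1 else 0)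

/-- The cumulative distribution function of a random variable `X` under `P`. -/
noncomputable def cdfOf {Ω : Type*} [MeasurableSpace Ω] (P : Measure Ω) (X : Ω → ℝ) : ℝ → ℝ :=
  fun x => (P {ω | X ω ≤ x}).toReal

/-- `Z n` is bounded in probability (O_P(1)). -/
def BoundedInProb {Ω : Type*} [MeasurableSpace Ω] (P : Measure Ω) (Z : ℕ → Ω → ℝ) : Prop :=
  ∀ ε : ℝ, 0 < ε → ∃ M : ℝ, 0 < M ∧
    ∀ᶠ n in atTop, P {ω | M < |Z n ω|} ≤ ENNReal.ofReal ε

/-- Convergence in probability of `Z n` to `+∞`. -/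
def TendstoInProbAtTop {Ω : Type*} [MeasurableSpace Ω] (P : Measure Ω)
    (Z : ℕ → Ω → ℝ) : Prop :=
  ∀ M : ℝ, Tendsto (fun n => P {ω | Z n ω ≤ M}) atTop (nhds 0)

/-!
On the event that `X 1, …, X n` are pairwise distinct, each concomitant picks out a single
index, so the concomitant of `Y = h₀ ∘ X + ε` is `h₀ (X_{t:n}) + ε_{t,n}`. Hence the increments
of `Y_{·,n}` and of `ε_{·,n}` differ exactly by those of `h₀ (X_{·:n})`, and by the triangle
inequality each of the two normalised variations is at most the other plus `B⁰_{n,p}`. Since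
`B⁰_{n,p} = O_P(1)`, divergence in probability transfers in both directions.
-/

lemma exists_eq_orderStat {Ω : Type*} (X : ℕ → Ω → ℝ) {n t : ℕ} (ω : Ω)
    (ht : 1 ≤ t) (htn : t ≤ n) : ∃ s ∈ Finset.Icc 1 n, X s ω = orderStat X n t ω := by
  set l := (List.range n).map fun s => X (s + 1) ω
  have hlen : t - 1 < (List.insertionSort (· ≤ ·) l).length := by
    rw [(List.perm_insertionSort _ l).length_eq, List.length_map, List.length_range]
    omega
  have hmem : orderStat X n t ω ∈ l := by
    rw [← (List.perm_insertionSort (· ≤ ·) l).mem_iff, orderStat, List.getD_eq_getElem _ _ hlen]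
    exact List.getElem_mem _
  obtain ⟨a, ha, hXa⟩ := List.mem_map.mp hmem
  exact ⟨a + 1, Finset.mem_Icc.mpr ⟨by omega, by simpa using ha⟩, hXa⟩

lemma concomitant_add {Ω : Type*} (X Y Z : ℕ → Ω → ℝ) (n t : ℕ) (ω : Ω) :
    concomitant X (fun s ω' => Y s ω' + Z s ω') n t ω =
      concomitant X Y n t ω + concomitant X Z n t ω := by
  simp only [concomitant, add_mul, Finset.sum_add_distrib]

lemma concomitant_comp_self {Ω : Type*} (X : ℕ → Ω → ℝ) (g : ℝ → ℝ) {n t : ℕ} {ω : Ω}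
    (hinj : Set.InjOn (fun s => X s ω) (Set.Icc 1 n)) (ht : 1 ≤ t) (htn : t ≤ n) :
    concomitant X (fun s ω' => g (X s ω')) n t ω = g (orderStat X n t ω) := by
  obtain ⟨s, hs, hXs⟩ := exists_eq_orderStat X ω ht htn
  rw [concomitant, Finset.sum_eq_single_of_mem s hs]
  · simp [hXs]
  · intro s' hs' hne
    have : X s' ω ≠ orderStat X n t ω := fun h =>
      hne (hinj (by simpa using hs') (by simpa using hs) (h.trans hXs.symm))
    simp [this]

lemma concomitant_comp_add {Ω : Type*} (X ε : ℕ → Ω → ℝ) (g : ℝ → ℝ) {n t : ℕ} {ω : Ω}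
    (hinj : Set.InjOn (fun s => X s ω) (Set.Icc 1 n)) (ht : 1 ≤ t) (htn : t ≤ n) :
    concomitant X (fun s ω' => g (X s ω') + ε s ω') n t ω =
      g (orderStat X n t ω) + concomitant X ε n t ω := by
  rw [concomitant_add, concomitant_comp_self X g hinj ht htn]

lemma ae_injOn_Icc {Ω : Type*} [MeasurableSpace Ω] {P : Measure Ω} {X : ℕ → Ω → ℝ}
    (hdist : ∀ s t : ℕ, 1 ≤ s → 1 ≤ t → s ≠ t → ∀ᵐ ω ∂P, X s ω ≠ X t ω) (n : ℕ) :
    ∀ᵐ ω ∂P, Set.InjOn (fun s => X s ω) (Set.Icc 1 n) := by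
  have hpair : ∀ s ∈ Finset.Icc 1 n, ∀ s' ∈ Finset.Icc 1 n,
      ∀ᵐ ω ∂P, X s ω = X s' ω → s = s' := fun s hs s' hs' => by
    rcases eq_or_ne s s' with rfl | hne
    · exact .of_forall fun _ _ => rfl
    · exact (hdist s s' (Finset.mem_Icc.mp hs).1 (Finset.mem_Icc.mp hs').1 hne).mono
        fun _ hω heq => absurd heq hω
  filter_upwards [(eventually_all_finset _).mpr fun s hs =>
    (eventually_all_finset _).mpr (hpair s hs)] with ω hω s hs s' hs'
  exact hω s (by simpa using hs) s' (by simpa using hs')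

lemma mul_sum_abs_le_of_abs_sub_le {ι : Type*} (I : Finset ι) {c : ℝ} (hc : 0 ≤ c)
    {u v w : ι → ℝ} (h : ∀ i ∈ I, |u i - w i| ≤ |v i|) :
    c * ∑ i ∈ I, |u i| ≤ c * ∑ i ∈ I, |v i| + c * ∑ i ∈ I, |w i| := by
  rw [← mul_add, ← Finset.sum_add_distrib]
  exact mul_le_mul_of_nonneg_left (Finset.sum_le_sum fun i hi => by
    linarith [abs_sub_abs_le_abs_sub (u i) (w i), h i hi]) hc

theorem TendstoInProbAtTop.of_le_add {Ω : Type*} [MeasurableSpace Ω] {P : Measure Ω}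
    {A B E : ℕ → Ω → ℝ} (hA : TendstoInProbAtTop P A) (hB : BoundedInProb P B)
    (hle : ∀ n, ∀ᵐ ω ∂P, A n ω ≤ B n ω + E n ω) : TendstoInProbAtTop P E := by
  intro M
  refine ENNReal.tendsto_nhds_zero.mpr fun δ hδ => ?_
  obtain ⟨r, -, hr0, hrδ⟩ := ENNReal.lt_iff_exists_real_btwn.mp (ENNReal.half_pos hδ.ne')
  obtain ⟨K, -, hK⟩ := hB r (ENNReal.ofReal_pos.mp hr0)
  have hAK : ∀ᶠ n in atTop, P {ω | A n ω ≤ M + K} ≤ δ / 2 :=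
    ((hA (M + K)).eventually_lt_const (ENNReal.half_pos hδ.ne')).mono fun _ h => h.le
  filter_upwards [hK, hAK] with n hKn hAKn
  have hsub : {ω | E n ω ≤ M} ≤ᵐ[P]
      (({ω | A n ω ≤ M + K} ∪ {ω | K < |B n ω|} : Set Ω) : Ω → Prop) := by
    filter_upwards [hle n] with ω hω (hE : E n ω ≤ M)
    by_cases hBK : K < |B n ω|
    · exact Or.inr hBK
    · exact Or.inl (show A n ω ≤ M + K by linarith [(le_abs_self (B n ω)).trans (not_lt.mp hBK)])
  calc P {ω | E n ω ≤ M}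
      ≤ P {ω | A n ω ≤ M + K} + P {ω | K < |B n ω|} :=
        (measure_mono_ae hsub).trans (measure_union_le _ _)
    _ ≤ δ / 2 + δ / 2 := add_le_add hAKn (hKn.trans hrδ.le)
    _ = δ := ENNReal.add_halves δ

theorem stmt_11_general {Ω : Type*} [MeasurableSpace Ω] (P : Measure Ω)
    (X ε : ℕ → Ω → ℝ)
    (hdist : ∀ s t : ℕ, 1 ≤ s → 1 ≤ t → s ≠ t → ∀ᵐ ω ∂P, X s ω ≠ X t ω)
    (h0 : ℝ → ℝ) (p : ℝ)
    (horder : BoundedInProb P (fun n ω => (n : ℝ) ^ (-(1 / p)) *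
      ∑ t ∈ Finset.Icc 2 n, |h0 (orderStat X n t ω) - h0 (orderStat X n (t - 1) ω)|)) :
    TendstoInProbAtTop P (fun n ω => (n : ℝ) ^ (-(1 / p)) *
      ∑ t ∈ Finset.Icc 2 n,
        |concomitant X (fun s ω' => h0 (X s ω') + ε s ω') n t ω -
          concomitant X (fun s ω' => h0 (X s ω') + ε s ω') n (t - 1) ω|) ↔
    TendstoInProbAtTop P (fun n ω => (n : ℝ) ^ (-(1 / p)) *
      ∑ t ∈ Finset.Icc 2 n,
        |concomitant X ε n t ω - concomitant X ε n (t - 1) ω|) := by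
  have hscale (n : ℕ) : (0 : ℝ) ≤ (n : ℝ) ^ (-(1 / p)) := Real.rpow_nonneg n.cast_nonneg _
  have hincr (n : ℕ) : ∀ᵐ ω ∂P, ∀ t ∈ Finset.Icc 2 n,
      (concomitant X (fun s ω' => h0 (X s ω') + ε s ω') n t ω -
        concomitant X (fun s ω' => h0 (X s ω') + ε s ω') n (t - 1) ω) -
      (concomitant X ε n t ω - concomitant X ε n (t - 1) ω) =
      h0 (orderStat X n t ω) - h0 (orderStat X n (t - 1) ω) := by
    filter_upwards [ae_injOn_Icc hdist n] with ω hinj t ht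
    obtain ⟨ht2, htn⟩ := Finset.mem_Icc.mp ht
    rw [concomitant_comp_add X ε h0 hinj (by omega) htn,
      concomitant_comp_add X ε h0 hinj (by omega) (by omega)]
    ring
  constructor
  · refine fun h => h.of_le_add horder fun n => (hincr n).mono fun ω hω => ?_
    exact mul_sum_abs_le_of_abs_sub_le _ (hscale n) fun t ht => by rw [hω t ht]
  · refine fun h => h.of_le_add horder fun n => (hincr n).mono fun ω hω => ?_
    exact mul_sum_abs_le_of_abs_sub_le _ (hscale n) fun t ht => by rw [abs_sub_comm, hω t ht]

theorem stmt_11 {Ω : Type*} [MeasurableSpace Ω] (P : Measure Ω) [IsProbabilityMeasure P]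
    (X ε : ℕ → Ω → ℝ) (hmeasX : ∀ t, Measurable (X t)) (hmeasε : ∀ t, Measurable (ε t))
    (hcdf : ∀ t : ℕ, 1 ≤ t → Continuous (cdfOf P (X t)))
    (hdist : ∀ s t : ℕ, 1 ≤ s → 1 ≤ t → s ≠ t → ∀ᵐ ω ∂P, X s ω ≠ X t ω)
    (h0 : ℝ → ℝ) (p : ℝ) (hp : 0 < p)
    (horder : BoundedInProb P (fun n ω => (n : ℝ) ^ (-(1 / p)) *
      ∑ t ∈ Finset.Icc 2 n, |h0 (orderStat X n t ω) - h0 (orderStat X n (t - 1) ω)|)) :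
    TendstoInProbAtTop P (fun n ω => (n : ℝ) ^ (-(1 / p)) *
      ∑ t ∈ Finset.Icc 2 n,
        |concomitant X (fun s ω' => h0 (X s ω') + ε s ω') n t ω -
          concomitant X (fun s ω' => h0 (X s ω') + ε s ω') n (t - 1) ω|) ↔
    TendstoInProbAtTop P (fun n ω => (n : ℝ) ^ (-(1 / p)) *
      ∑ t ∈ Finset.Icc 2 n,
        |concomitant X ε n t ω - concomitant X ε n (t - 1) ω|) :=
  stmt_11_general P X ε hdist h0 p horder
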